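/- arXiv:1910.04026 — 2 statements merged into one kernel-verified Lean document; each statement's English description precedes it below -/
import Mathlib

section
/- Let G be a C¹ strictly positive solution on the circle of the equation [∂_θ U + F(G)] G + ∂_θ G = 0 with ∫_{-π}^{π} G dθ = 1, where F(G)(θ) = ∫_{-π}^{π} F(θ,θ') G(θ') dθ'. Then sup_θ G(θ) ≤ K* exp(2π(‖∂_θ U‖_∞ + ‖F‖_∞)) for a universal constant K*; one may take K* = 1/π. -/
open MeasureTheory Real

theorem stationary_density_upper_bound (U G : ℝ → ℝ) (F : ℝ → ℝ → ℝ) (CU CF : ℝ)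
    (hU : ContDiff ℝ 1 U) (hUper : Function.Periodic U (2 * π))
    (hFc : Continuous (Function.uncurry F))
    (hUb : ∀ θ, |deriv U θ| ≤ CU) (hFb : ∀ θ θ', |F θ θ'| ≤ CF)
    (hG : ContDiff ℝ 1 G) (hGpos : ∀ θ, 0 < G θ) (hGper : Function.Periodic G (2 * π))
    (hG1 : (∫ θ in (-π)..π, G θ) = 1)
    (heq : ∀ θ, (deriv U θ + ∫ s in (-π)..π, F θ s * G s) * G θ + deriv G θ = 0) :
    ∀ θ, G θ ≤ (1 / π) * Real.exp (2 * π * (CU + CF)) := by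
  have hπ : (0:ℝ) < π := Real.pi_pos
  have hab : -π ≤ π := by linarith
  have hGc : Continuous G := hG.continuous
  have hGint : IntervalIntegrable G volume (-π) π := hGc.intervalIntegrable _ _
  set C := CU + CF with hC
  have hCF0 : 0 ≤ CF := (abs_nonneg _).trans (hFb 0 0)
  have hC0 : 0 ≤ C := by
    have := (abs_nonneg _).trans (hUb 0); linarith
  -- bound on the convolution term
  have hIbound : ∀ t, |∫ s in (-π)..π, F t s * G s| ≤ CF := by
    intro t
    have hcont : Continuous (fun s => F t s * G s) :=
      (hFc.comp (continuous_const.prodMk continuous_id)).mul hGc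
    have h1 : |∫ s in (-π)..π, F t s * G s| ≤ ∫ s in (-π)..π, |F t s * G s| :=
      intervalIntegral.abs_integral_le_integral_abs hab
    have h2 : (∫ s in (-π)..π, |F t s * G s|) ≤ ∫ s in (-π)..π, CF * G s := by
      apply intervalIntegral.integral_mono_on hab
        (hcont.abs.intervalIntegrable _ _) ((continuous_const.mul hGc).intervalIntegrable _ _)
      intro x _
      rw [abs_mul, abs_of_pos (hGpos x)]
      exact mul_le_mul_of_nonneg_right (hFb t x) (hGpos x).le
    have h3 : (∫ s in (-π)..π, CF * G s) = CF := by
      rw [intervalIntegral.integral_const_mul, hG1, mul_one]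
    linarith
  -- derivative bound for log ∘ G
  have hGd : ∀ t, HasDerivAt G (deriv G t) t := fun t =>
    ((hG.differentiable one_ne_zero) t).hasDerivAt
  have hdb : ∀ t, |deriv G t| ≤ C * G t := by
    intro t
    have h := heq t
    have : deriv G t = -((deriv U t + ∫ s in (-π)..π, F t s * G s) * G t) := by linarith
    rw [this, abs_neg, abs_mul, abs_of_pos (hGpos t)]
    apply mul_le_mul_of_nonneg_right _ (hGpos t).le
    calc |deriv U t + ∫ s in (-π)..π, F t s * G s|
        ≤ |deriv U t| + |∫ s in (-π)..π, F t s * G s| := abs_add_le _ _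
      _ ≤ CU + CF := add_le_add (hUb t) (hIbound t)
  set f : ℝ → ℝ := fun t => Real.log (G t) with hf
  have hfd : ∀ t, HasDerivAt f (deriv G t / G t) t := fun t =>
    (hGd t).log (hGpos t).ne'
  have hfb : ∀ t, |deriv G t / G t| ≤ C := by
    intro t
    rw [abs_div, abs_of_pos (hGpos t), div_le_iff₀ (hGpos t)]
    exact hdb t
  have hlip : ∀ x y : ℝ, |f y - f x| ≤ C * |y - x| := by
    intro x y
    have := Convex.norm_image_sub_le_of_norm_hasDerivWithin_le
      (f := f) (f' := fun t => deriv G t / G t) (s := Set.univ) (C := C)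
      (fun t _ => (hfd t).hasDerivWithinAt) (fun t _ => hfb t) convex_univ
      (Set.mem_univ x) (Set.mem_univ y)
    simpa [Real.norm_eq_abs] using this
  -- find a point where G is small
  obtain ⟨θs, hθs, hmin⟩ : ∃ θs ∈ Set.Icc (-π) π, ∀ y ∈ Set.Icc (-π) π, G θs ≤ G y := by
    obtain ⟨θs, hθs, hm⟩ := isCompact_Icc.exists_isMinOn (Set.nonempty_Icc.2 hab)
      (hGc.continuousOn (s := Set.Icc (-π) π))
    exact ⟨θs, hθs, fun y hy => hm hy⟩
  have hGsmall : G θs ≤ 1 / (2 * π) := by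
    by_contra hcon
    push_neg at hcon
    have h2 : (∫ θ in (-π)..π, (fun _ => G θs) θ) ≤ ∫ θ in (-π)..π, G θ :=
      intervalIntegral.integral_mono_on hab (intervalIntegrable_const) hGint
        (fun x hx => hmin x hx)
    rw [hG1, intervalIntegral.integral_const, smul_eq_mul] at h2
    rw [div_lt_iff₀ (by linarith : (0:ℝ) < 2 * π)] at hcon
    nlinarith
  -- main bound
  intro θ
  set n : ℤ := ⌊(θ + π) / (2 * π)⌋ with hn
  set θ' : ℝ := θ - n * (2 * π) with hθ'
  have hGθ' : G θ' = G θ := hGper.sub_int_mul_eq n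
  have h2π : (0:ℝ) < 2 * π := by linarith
  have hfl : (n : ℝ) ≤ (θ + π) / (2 * π) := Int.floor_le _
  have hfu : (θ + π) / (2 * π) < n + 1 := Int.lt_floor_add_one _
  have hθ'mem : θ' ∈ Set.Icc (-π) π := by
    constructor
    · rw [hθ']
      have := (le_div_iff₀ h2π).1 hfl
      linarith
    · rw [hθ']
      have := (div_lt_iff₀ h2π).1 hfu
      nlinarith
  have hdist : |θ' - θs| ≤ 2 * π := by
    rw [abs_le]
    obtain ⟨h1, h2⟩ := hθ'mem
    obtain ⟨h3, h4⟩ := hθs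
    constructor <;> linarith
  have key : f θ' ≤ f θs + C * (2 * π) := by
    have h1 := hlip θs θ'
    have h2 : |f θ' - f θs| ≤ C * (2 * π) :=
      h1.trans (mul_le_mul_of_nonneg_left hdist hC0)
    have := (abs_le.1 h2).2
    linarith
  have hlog : f θs ≤ Real.log (1 / (2 * π)) :=
    Real.log_le_log (hGpos θs) hGsmall
  have hGexp : G θ = Real.exp (f θ') := by
    rw [hf]; simp only; rw [Real.exp_log (by rw [hGθ']; exact hGpos θ)]
    exact hGθ'.symm
  clear_value θ' n f C
  subst hC
  rw [hGexp]
  calc Real.exp (f θ') ≤ Real.exp (Real.log (1 / (2 * π)) + (CU + CF) * (2 * π)) := by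
        exact Real.exp_le_exp.2 (by linarith [key, hlog])
    _ = (1 / (2 * π)) * Real.exp ((CU + CF) * (2 * π)) := by
        rw [Real.exp_add, Real.exp_log (by positivity)]
    _ ≤ (1 / π) * Real.exp (2 * π * (CU + CF)) := by
        rw [show (CU + CF) * (2 * π) = 2 * π * (CU + CF) by ring]
        refine mul_le_mul_of_nonneg_right ?_ (Real.exp_pos _).le
        rw [div_le_div_iff₀ (by linarith) hπ]
        linarith
end

section
/- Under the same hypotheses as the upper bound: if G is a positive C¹ probability density on the circle solving [∂_θ U + F(G)]G + ∂_θ G = 0, then inf_θ G(θ) ≥ K_* exp(-2π(‖∂_θU‖_∞ + ‖F‖_∞)) for a universal constant K_* > 0 (one can take K_* = 1/(4π)). -/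
open MeasureTheory Real

theorem stationary_density_lower_bound (U G : ℝ → ℝ) (F : ℝ → ℝ → ℝ) (CU CF : ℝ)
    (hU : ContDiff ℝ 1 U) (hUper : Function.Periodic U (2 * π))
    (hFc : Continuous (Function.uncurry F))
    (hUb : ∀ θ, |deriv U θ| ≤ CU) (hFb : ∀ θ θ', |F θ θ'| ≤ CF)
    (hG : ContDiff ℝ 1 G) (hGpos : ∀ θ, 0 < G θ) (hGper : Function.Periodic G (2 * π))
    (hG1 : (∫ θ in (-π)..π, G θ) = 1)
    (heq : ∀ θ, (deriv U θ + ∫ s in (-π)..π, F θ s * G s) * G θ + deriv G θ = 0) :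
    ∀ θ, (1 / (4 * π)) * Real.exp (-(2 * π * (CU + CF))) ≤ G θ := by
  have hπ : (0:ℝ) < π := Real.pi_pos
  have hGc : Continuous G := hG.continuous
  have hGdiff : Differentiable ℝ G := hG.differentiable one_ne_zero
  set C := CU + CF with hCdef
  have hCU0 : 0 ≤ CU := le_trans (abs_nonneg _) (hUb 0)
  have hCF0 : 0 ≤ CF := le_trans (abs_nonneg _) (hFb 0 0)
  have hC0 : 0 ≤ C := add_nonneg hCU0 hCF0
  -- bound on the interaction term
  have hIb : ∀ θ, |∫ s in (-π)..π, F θ s * G s| ≤ CF := by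
    intro θ
    have hcont : Continuous fun s => F θ s * G s :=
      (hFc.comp (continuous_const.prodMk continuous_id)).mul hGc
    have h1 : |∫ s in (-π)..π, F θ s * G s| ≤ ∫ s in (-π)..π, |F θ s * G s| :=
      intervalIntegral.abs_integral_le_integral_abs (by linarith)
    have h2 : (∫ s in (-π)..π, |F θ s * G s|) ≤ ∫ s in (-π)..π, CF * G s := by
      apply intervalIntegral.integral_mono_on (by linarith)
        (hcont.abs.intervalIntegrable _ _)
        ((continuous_const.mul hGc).intervalIntegrable _ _)
      intro s _
      rw [abs_mul, abs_of_pos (hGpos s)]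
      exact mul_le_mul_of_nonneg_right (hFb θ s) (hGpos s).le
    calc |∫ s in (-π)..π, F θ s * G s| ≤ ∫ s in (-π)..π, CF * G s := le_trans h1 h2
      _ = CF := by rw [intervalIntegral.integral_const_mul, hG1, mul_one]
  -- derivative bound
  have hderiv : ∀ θ, |deriv G θ| ≤ C * G θ := by
    intro θ
    have h := heq θ
    have hd : deriv G θ = -((deriv U θ + ∫ s in (-π)..π, F θ s * G s) * G θ) := by linarith
    rw [hd, abs_neg, abs_mul, abs_of_pos (hGpos θ)]
    refine mul_le_mul_of_nonneg_right ?_ (hGpos θ).le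
    calc |deriv U θ + ∫ s in (-π)..π, F θ s * G s|
        ≤ |deriv U θ| + |∫ s in (-π)..π, F θ s * G s| := abs_add_le _ _
      _ ≤ CU + CF := add_le_add (hUb θ) (hIb θ)
  -- log G is C-Lipschitz
  have hlogd : ∀ x : ℝ, HasDerivAt (fun t => Real.log (G t)) (deriv G x / G x) x := fun x =>
    ((hGdiff x).hasDerivAt).log (hGpos x).ne'
  have hlip : ∀ a b : ℝ, |Real.log (G b) - Real.log (G a)| ≤ C * |b - a| := by
    intro a b
    have := Convex.norm_image_sub_le_of_norm_hasDerivWithin_le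
      (f := fun t => Real.log (G t)) (f' := fun x => deriv G x / G x) (C := C)
      (fun x _ => (hlogd x).hasDerivWithinAt)
      (fun x _ => by
        rw [Real.norm_eq_abs, abs_div, abs_of_pos (hGpos x), div_le_iff₀ (hGpos x)]
        exact hderiv x)
      convex_univ (Set.mem_univ a) (Set.mem_univ b)
    simpa [Real.norm_eq_abs] using this
  -- Harnack-type inequality
  have hlog : ∀ a b : ℝ, G a * Real.exp (-(C * |b - a|)) ≤ G b := by
    intro a b
    have h1 : Real.log (G a) + -(C * |b - a|) ≤ Real.log (G b) := by
      have := (abs_le.mp (hlip a b)).1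
      linarith
    calc G a * Real.exp (-(C * |b - a|))
        = Real.exp (Real.log (G a) + -(C * |b - a|)) := by
          rw [Real.exp_add, Real.exp_log (hGpos a)]
      _ ≤ Real.exp (Real.log (G b)) := Real.exp_le_exp.mpr h1
      _ = G b := Real.exp_log (hGpos b)
  -- a point where G is at least 1/(2π)
  obtain ⟨θ₀, hθ₀mem, hθ₀max⟩ := isCompact_Icc.exists_isMaxOn
    (Set.nonempty_Icc.mpr (by linarith : -π ≤ π)) (hGc.continuousOn)
  have hθ₀ : 1 / (2 * π) ≤ G θ₀ := by
    by_contra h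
    push_neg at h
    have hle : (∫ θ in (-π)..π, G θ) ≤ ∫ _ in (-π)..π, G θ₀ := by
      apply intervalIntegral.integral_mono_on (by linarith)
        (hGc.intervalIntegrable _ _) intervalIntegrable_const
      intro x hx; exact hθ₀max hx
    rw [hG1, intervalIntegral.integral_const, smul_eq_mul] at hle
    have h2 : (π - -π) * G θ₀ < (π - -π) * (1 / (2 * π)) :=
      mul_lt_mul_of_pos_left h (by linarith)
    have h3 : (π - -π) * (1 / (2 * π)) = 1 := by field_simp; ring
    linarith
  -- conclude
  intro θ
  obtain ⟨θ', hθ'mem, hθ'eq⟩ := hGper.exists_mem_Ico (by linarith : (0:ℝ) < 2 * π) θ (-π)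
  have hθ'1 : -π ≤ θ' := hθ'mem.1
  have hθ'2 : θ' < -π + 2 * π := hθ'mem.2
  have hdist : |θ' - θ₀| ≤ 2 * π := by
    have h1 : -π ≤ θ₀ := hθ₀mem.1
    have h2 : θ₀ ≤ π := hθ₀mem.2
    rw [abs_le]; constructor <;> linarith
  rw [hθ'eq]
  calc (1 / (4 * π)) * Real.exp (-(2 * π * C))
      ≤ (1 / (2 * π)) * Real.exp (-(2 * π * C)) := by
        apply mul_le_mul_of_nonneg_right _ (Real.exp_pos _).le
        apply div_le_div_of_nonneg_left one_pos.le (by linarith) (by linarith)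
    _ ≤ G θ₀ * Real.exp (-(C * |θ' - θ₀|)) := by
        apply mul_le_mul hθ₀ ?_ (Real.exp_pos _).le (hGpos θ₀).le
        apply Real.exp_le_exp.mpr
        have : C * |θ' - θ₀| ≤ C * (2 * π) := mul_le_mul_of_nonneg_left hdist hC0
        linarith
    _ ≤ G θ' := hlog θ₀ θ'
end
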